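/- Let $S$ be a string, $\tau \ge 1$, and suppose both $j-1$ and $j$ belong to $\mathsf{R}(\tau,S) = \{i : \mathrm{per}(S[i..i+3\tau-2]) \le \tau/3\}$. Then $\mathrm{per}(S[j-1..j-1+3\tau-2]) = \mathrm{per}(S[j..j+3\tau-2])$, and moreover the longest prefix of $S[j-1..|S|]$ with this period and the longest prefix of $S[j..|S|]$ with this period end at the same position of $S$. -/
import Mathlib


/-- Length of the longest common prefix of two lists. -/
def lcpLen {α : Type*} [DecidableEq α] : List α → List α → ℕ
  | a :: s, b :: t => if a = b then lcpLen s t + 1 else 0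
  | _, _ => 0

/-- The fragment `T[a..a+len)` of a (1-indexed) text `T : ℕ → α`. -/
def frag {α : Type*} (T : ℕ → α) (a len : ℕ) : List α :=
  (List.range len).map (fun t => T (a + t))

/-- The suffix `T[j..n]` of a text of length `n`. -/
def suff {α : Type*} (T : ℕ → α) (n j : ℕ) : List α := frag T j (n + 1 - j)

/-- The fragment `T^∞[j..j+ℓ)` of the infinite periodic extension of `T[1..n]`. -/
def tinf {α : Type*} (T : ℕ → α) (n j ℓ : ℕ) : List α :=
  (List.range ℓ).map (fun t => T ((j + t - 1) % n + 1))

/-- `p` is a period of the list `X`. -/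
def hasPer {α : Type*} (X : List α) (p : ℕ) : Prop :=
  ∀ i, i + p < X.length → X[i]? = X[i + p]?

/-- The shortest period of a list. -/
noncomputable def per {α : Type*} (X : List α) : ℕ := sInf {p | 1 ≤ p ∧ hasPer X p}

/-- `runEnd S n i p` is the maximal `e ≤ n+1` such that `S[i..e)` has period `p`,
i.e. `S[i..runEnd S n i p)` is the longest prefix of `S[i..n]` with period `p`. -/
noncomputable def runEnd {α : Type*} (S : ℕ → α) (n i p : ℕ) : ℕ :=
  sSup {e | i ≤ e ∧ e ≤ n + 1 ∧ ∀ t, i ≤ t → t + p < e → S t = S (t + p)}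

section Aux

variable {α : Type*}

lemma frag_length (T : ℕ → α) (a l : ℕ) : (frag T a l).length = l := by
  simp [frag]

lemma frag_getElem? (T : ℕ → α) (a l i : ℕ) (h : i < l) :
    (frag T a l)[i]? = some (T (a + i)) := by
  simp [frag, h]

lemma hasPer_frag {T : ℕ → α} {a l p : ℕ} :
    hasPer (frag T a l) p ↔ ∀ t, t + p < l → T (a + t) = T (a + t + p) := by
  constructor
  · intro h t ht
    have h2 := h t (by simpa [frag_length] using ht)
    rw [frag_getElem? T a l t (by omega), frag_getElem? T a l (t + p) (by omega)] at h2
    rw [show a + (t + p) = a + t + p from by omega] at h2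
    exact Option.some.inj h2
  · intro h i hi
    rw [frag_length] at hi
    rw [frag_getElem? T a l i (by omega), frag_getElem? T a l (i + p) (by omega)]
    rw [show a + (i + p) = a + i + p from by omega]
    exact congrArg some (h i hi)

lemma per_mem (X : List α) : 1 ≤ per X ∧ hasPer X (per X) := by
  have hne : {p | 1 ≤ p ∧ hasPer X p}.Nonempty :=
    ⟨X.length + 1, by omega, fun i hi => absurd hi (by omega)⟩
  exact Nat.sInf_mem hne

lemma per_le {X : List α} {p : ℕ} (h1 : 1 ≤ p) (h2 : hasPer X p) : per X ≤ p :=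
  Nat.sInf_le ⟨h1, h2⟩

lemma steps (f : ℕ → α) (g m : ℕ) (hf : ∀ t, t + g < m → f t = f (t + g)) :
    ∀ c a, a + c * g < m → f a = f (a + c * g) := by
  intro c
  induction c with
  | zero => intro a _; simp
  | succ c ih =>
    intro a h
    rw [Nat.succ_mul] at h ⊢
    calc f a = f (a + g) := hf a (by omega)
      _ = f (a + g + c * g) := ih (a + g) (by omega)
      _ = f (a + (c * g + g)) := congrArg f (by omega)

lemma fwAux (N : ℕ)
    (ih : ∀ p q n : ℕ, ∀ f : ℕ → α, p + q ≤ N → 1 ≤ p → 1 ≤ q → p + q ≤ n →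
      (∀ i, i + p < n → f i = f (i + p)) → (∀ i, i + q < n → f i = f (i + q)) →
      ∀ i, i + Nat.gcd p q < n → f i = f (i + Nat.gcd p q))
    (p q n : ℕ) (f : ℕ → α) (hN : p + q ≤ N + 1) (hp : 1 ≤ p) (hq : 1 ≤ q)
    (hlt : p < q) (hn : p + q ≤ n)
    (hfp : ∀ i, i + p < n → f i = f (i + p)) (hfq : ∀ i, i + q < n → f i = f (i + q)) :
    ∀ i, i + Nat.gcd p q < n → f i = f (i + Nat.gcd p q) := by
  have hq' : 1 ≤ q - p := by omega
  have hfp' : ∀ i, i + p < n - p → f i = f (i + p) := fun i hi => hfp i (by omega)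
  have hfq' : ∀ i, i + (q - p) < n - p → f i = f (i + (q - p)) := by
    intro i hi
    have h1 : f i = f (i + q) := hfq i (by omega)
    have h2 : f (i + (q - p)) = f (i + (q - p) + p) := hfp (i + (q - p)) (by omega)
    rw [show i + (q - p) + p = i + q from by omega] at h2
    rw [h1, h2]
  have hgcd : Nat.gcd p (q - p) = Nat.gcd p q := Nat.gcd_sub_self_right (le_of_lt hlt)
  have h1 : ∀ i, i + Nat.gcd p q < n - p → f i = f (i + Nat.gcd p q) := by
    intro i hi
    have h := ih p (q - p) (n - p) f (by omega) hp hq' (by omega) hfp' hfq' i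
      (by rw [hgcd]; exact hi)
    rwa [hgcd] at h
  have hg1 : 0 < Nat.gcd p q := Nat.gcd_pos_of_pos_left _ hp
  have hglep : Nat.gcd p q ≤ p := Nat.le_of_dvd (by omega) (Nat.gcd_dvd_left p q)
  have hgqp : Nat.gcd p q ≤ q - p :=
    Nat.le_of_dvd (by omega) (Nat.dvd_sub (Nat.gcd_dvd_right p q) (Nat.gcd_dvd_left p q))
  intro i
  induction i using Nat.strong_induction_on with
  | _ i ih2 =>
    intro hi
    by_cases hc : i + Nat.gcd p q < n - p
    · exact h1 i hc
    · have hip : p ≤ i := by omega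
      have e1 : f (i - p) = f i := by
        have h := hfp (i - p) (by omega)
        rwa [show i - p + p = i from by omega] at h
      have e2 : f (i - p + Nat.gcd p q) = f (i + Nat.gcd p q) := by
        have h := hfp (i - p + Nat.gcd p q) (by omega)
        rwa [show i - p + Nat.gcd p q + p = i + Nat.gcd p q from by omega] at h
      rw [← e1, ← e2]
      exact ih2 (i - p) (by omega) (by omega)

lemma fineWilf (N p q n : ℕ) (f : ℕ → α) (hN : p + q ≤ N) (hp : 1 ≤ p) (hq : 1 ≤ q)
    (hn : p + q ≤ n) (hfp : ∀ i, i + p < n → f i = f (i + p))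
    (hfq : ∀ i, i + q < n → f i = f (i + q)) :
    ∀ i, i + Nat.gcd p q < n → f i = f (i + Nat.gcd p q) := by
  induction N generalizing p q n f with
  | zero => exact absurd hN (by omega)
  | succ N ih =>
    rcases lt_trichotomy p q with hlt | heq | hgt
    · exact fwAux N ih p q n f hN hp hq hlt hn hfp hfq
    · subst heq
      intro i hi
      rw [Nat.gcd_self] at hi ⊢
      exact hfp i hi
    · intro i hi
      rw [Nat.gcd_comm] at hi ⊢
      exact fwAux N ih q p n f (by omega) hq hp hgt (by omega) hfq hfp i hi

end Aux

/-- Lemma `lm:R-block` (first two items): if `j-1, j ∈ R(τ,S)` then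
`per(S[j-1..j-1+3τ-2]) = per(S[j..j+3τ-2])` and the longest prefixes of `S[j-1..|S|]`
and `S[j..|S|]` with this period end at the same position of `S`. -/
theorem run_block_same_period_same_end {α : Type*} [LinearOrder α] (S : ℕ → α) (k τ : ℕ)
    (hτ : 1 ≤ τ) (j : ℕ) (hj : 2 ≤ j) (hjk : j + 3 * τ ≤ k + 2)
    (hmem : 3 * per (frag S (j - 1) (3 * τ - 1)) ≤ τ)
    (hmem' : 3 * per (frag S j (3 * τ - 1)) ≤ τ) :
    per (frag S (j - 1) (3 * τ - 1)) = per (frag S j (3 * τ - 1)) ∧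
      runEnd S k (j - 1) (per (frag S j (3 * τ - 1))) =
        runEnd S k j (per (frag S j (3 * τ - 1))) := by
  obtain ⟨hp1, hpX⟩ := per_mem (frag S (j - 1) (3 * τ - 1))
  obtain ⟨hq1, hqY⟩ := per_mem (frag S j (3 * τ - 1))
  rw [hasPer_frag] at hpX hqY
  set p := per (frag S (j - 1) (3 * τ - 1)) with hpdef
  set q := per (frag S j (3 * τ - 1)) with hqdef
  have hτp : 3 * p ≤ τ := hmem
  have hτq : 3 * q ≤ τ := hmem'
  have hpq : p + q ≤ 3 * τ - 2 := by omega
  set g := Nat.gcd p q with hgdef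
  have hg1 : 0 < g := Nat.gcd_pos_of_pos_left _ hp1
  have hgp : g ∣ p := Nat.gcd_dvd_left p q
  have hgq : g ∣ q := Nat.gcd_dvd_right p q
  have hglep : g ≤ p := Nat.le_of_dvd (by omega) hgp
  have hgleq : g ≤ q := Nat.le_of_dvd (by omega) hgq
  -- the overlap S[j .. j+3τ-3] has periods p and q
  have hZp : ∀ i, i + p < 3 * τ - 2 → S (j + i) = S (j + i + p) := by
    intro i hi
    have h := hpX (i + 1) (by omega)
    rwa [show j - 1 + (i + 1) = j + i from by omega] at h
  have hZq : ∀ i, i + q < 3 * τ - 2 → S (j + i) = S (j + i + q) :=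
    fun i hi => hqY i (by omega)
  -- Fine–Wilf: the overlap has period g
  have hFW : ∀ i, i + g < 3 * τ - 2 → S (j + i) = S (j + i + g) := by
    intro i hi
    have h := fineWilf (p + q) p q (3 * τ - 2) (fun t => S (j + t)) le_rfl hp1 hq1 hpq
      (fun i hi => by
        show S (j + i) = S (j + (i + p))
        rw [← Nat.add_assoc]; exact hZp i hi)
      (fun i hi => by
        show S (j + i) = S (j + (i + q))
        rw [← Nat.add_assoc]; exact hZq i hi) i hi
    have h2 : S (j + i) = S (j + (i + g)) := h
    rwa [← Nat.add_assoc] at h2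
  have hSteps : ∀ c a, a + c * g < 3 * τ - 2 → S (j + a) = S (j + (a + c * g)) :=
    fun c a h =>
      steps (fun t => S (j + t)) g (3 * τ - 2)
        (fun t ht => by
          show S (j + t) = S (j + (t + g))
          rw [← Nat.add_assoc]; exact hFW t ht) c a h
  -- boundary extension to the left
  have h0 : S (j - 1) = S (j - 1 + p) := by
    have h := hpX 0 (by omega)
    rwa [Nat.add_zero] at h
  obtain ⟨c, hc⟩ := hgp
  have hc1 : 1 ≤ c := by
    rcases Nat.eq_zero_or_pos c with h | h
    · rw [h, Nat.mul_zero] at hc; omega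
    · exact h
  have hpgm : (c - 1) * g = p - g := by
    rw [Nat.sub_mul, one_mul, Nat.mul_comm c g, ← hc]
  have hbd : S (j - 1) = S (j - 1 + g) := by
    have hstep := hSteps (c - 1) (g - 1) (by rw [hpgm]; omega)
    rw [hpgm, show g - 1 + (p - g) = p - 1 from by omega,
      show j + (g - 1) = j - 1 + g from by omega,
      show j + (p - 1) = j - 1 + p from by omega] at hstep
    rw [h0]
    exact hstep.symm
  -- the left fragment has period g
  have hXg : hasPer (frag S (j - 1) (3 * τ - 1)) g := by
    rw [hasPer_frag]
    intro t ht
    cases t with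
    | zero => simpa using hbd
    | succ t =>
      have h := hFW t (by omega)
      rwa [show j + t = j - 1 + (t + 1) from by omega] at h
  have hpg2 : p = g := le_antisymm (per_le hg1 hXg) hglep
  -- the right fragment has period g
  obtain ⟨d, hd⟩ := hgq
  have hd1 : 1 ≤ d := by
    rcases Nat.eq_zero_or_pos d with h | h
    · rw [h, Nat.mul_zero] at hd; omega
    · exact h
  have hqgm : (d - 1) * g = q - g := by
    rw [Nat.sub_mul, one_mul, Nat.mul_comm d g, ← hd]
  have hYg : hasPer (frag S j (3 * τ - 1)) g := by
    rw [hasPer_frag]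
    intro t ht
    by_cases hcase : t + g < 3 * τ - 2
    · exact hFW t hcase
    · have ht2 : t = 3 * τ - 2 - g := by omega
      have hlast : S (j + (3 * τ - 2 - q)) = S (j + (3 * τ - 2)) := by
        have h := hqY (3 * τ - 2 - q) (by omega)
        rwa [show j + (3 * τ - 2 - q) + q = j + (3 * τ - 2) from by omega] at h
      have hstep := hSteps (d - 1) (3 * τ - 2 - q) (by rw [hqgm]; omega)
      rw [hqgm, show 3 * τ - 2 - q + (q - g) = 3 * τ - 2 - g from by omega] at hstep
      rw [ht2, show j + (3 * τ - 2 - g) + g = j + (3 * τ - 2) from by omega]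
      rw [← hstep]
      exact hlast
  have hqg2 : q = g := le_antisymm (per_le hg1 hYg) hgleq
  have hfirst : p = q := by rw [hpg2, hqg2]
  refine ⟨hfirst, ?_⟩
  -- runEnd part
  have hbd' : S (j - 1) = S (j - 1 + q) := by rw [hqg2]; exact hbd
  unfold runEnd
  have hjk' : j ≤ k + 1 := by omega
  have hj1 : j ∈ {e | j - 1 ≤ e ∧ e ≤ k + 1 ∧ ∀ t, j - 1 ≤ t → t + q < e → S t = S (t + q)} :=
    ⟨by omega, hjk', fun t h1 h2 => absurd h2 (by omega)⟩
  have hj2 : j ∈ {e | j ≤ e ∧ e ≤ k + 1 ∧ ∀ t, j ≤ t → t + q < e → S t = S (t + q)} :=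
    ⟨le_rfl, hjk', fun t h1 h2 => absurd h2 (by omega)⟩
  have hb1 : BddAbove {e | j - 1 ≤ e ∧ e ≤ k + 1 ∧ ∀ t, j - 1 ≤ t → t + q < e → S t = S (t + q)} :=
    ⟨k + 1, fun e he => he.2.1⟩
  have hb2 : BddAbove {e | j ≤ e ∧ e ≤ k + 1 ∧ ∀ t, j ≤ t → t + q < e → S t = S (t + q)} :=
    ⟨k + 1, fun e he => he.2.1⟩
  have hm1 := Nat.sSup_mem ⟨j, hj1⟩ hb1
  have hm2 := Nat.sSup_mem ⟨j, hj2⟩ hb2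
  apply le_antisymm
  · apply le_csSup hb2
    refine ⟨le_trans (le_csSup hb1 hj1) le_rfl, hm1.2.1, fun t h1 h2 => hm1.2.2 t (by omega) h2⟩
  · apply le_csSup hb1
    have hjle : j ≤ sSup {e | j ≤ e ∧ e ≤ k + 1 ∧ ∀ t, j ≤ t → t + q < e → S t = S (t + q)} :=
      le_csSup hb2 hj2
    refine ⟨by omega, hm2.2.1, ?_⟩
    intro t h1 h2
    rcases eq_or_lt_of_le h1 with he | hlt2
    · rw [← he]
      exact hbd'
    · exact hm2.2.2 t (by omega) h2
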